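/- arXiv:math/0608574 — 5 statements merged into one kernel-verified Lean document; each statement's English description precedes it below -/
import Mathlib

section
/- Let A be a positively graded commutative ring which is finitely generated as an A_0-algebra. Then the projective spectrum Proj A is a spectral topological space: it is T0 and quasi-compact, its quasi-compact open subsets are closed under finite intersections and form a basis of the topology, and every nonempty irreducible closed subset has a generic point. -/
open ProjectiveSpectrum TopologicalSpace

section Aux

variable {R A : Type*} [CommSemiring R] [CommRing A] [Algebra R A]
variable (𝒜 : ℕ → Submodule R A) [GradedAlgebra 𝒜]

/-- Every point of `Proj 𝒜` avoids some homogeneous element of positive degree. -/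
private lemma aux_exists_relevant (x : ProjectiveSpectrum 𝒜) :
    ∃ h : A, (∃ d, 0 < d ∧ h ∈ 𝒜 d) ∧ h ∉ x.asHomogeneousIdeal := by
  classical
  obtain ⟨a, ha, hax⟩ := SetLike.not_le_iff_exists.mp x.not_irrelevant_le
  have H : ∃ i, (DirectSum.decompose 𝒜 a i : A) ∉ x.asHomogeneousIdeal := by
    by_contra H
    push_neg at H
    exact hax (by
      rw [← DirectSum.sum_support_decompose 𝒜 a]
      exact Ideal.sum_mem _ fun i _ => H i)
  obtain ⟨i, hi⟩ := H
  have hi0 : i ≠ 0 := by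
    rintro rfl
    apply hi
    have := (HomogeneousIdeal.mem_irrelevant_iff 𝒜 a).mp ha
    rw [GradedRing.proj_apply] at this
    rw [this]
    exact Ideal.zero_mem _
  exact ⟨(DirectSum.decompose 𝒜 a i : A), ⟨i, Nat.pos_of_ne_zero hi0, SetLike.coe_mem _⟩, hi⟩

/-- Inside every open neighbourhood there is a basic open of a homogeneous element of
positive degree. -/
private lemma aux_basic_mem_subset {U : Set (ProjectiveSpectrum 𝒜)} (hU : IsOpen U)
    {x : ProjectiveSpectrum 𝒜} (hx : x ∈ U) :
    ∃ f : A, (∃ d, 0 < d ∧ f ∈ 𝒜 d) ∧ x ∈ basicOpen 𝒜 f ∧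
      (basicOpen 𝒜 f : Set (ProjectiveSpectrum 𝒜)) ⊆ U := by
  classical
  obtain ⟨V, ⟨r, rfl⟩, hxV, hVU⟩ :=
    (isTopologicalBasis_basic_opens 𝒜).exists_subset_of_mem_open hx hU
  have hrx : r ∉ x.asHomogeneousIdeal := hxV
  have H : ∃ i, (DirectSum.decompose 𝒜 r i : A) ∉ x.asHomogeneousIdeal := by
    by_contra H
    push_neg at H
    exact hrx (by
      rw [← DirectSum.sum_support_decompose 𝒜 r]
      exact Ideal.sum_mem _ fun i _ => H i)
  obtain ⟨i, hi⟩ := H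
  obtain ⟨h, ⟨d, hd, hhd⟩, hhx⟩ := aux_exists_relevant 𝒜 x
  have hmem : (DirectSum.decompose 𝒜 r i : A) * h ∈ 𝒜 (i + d) :=
    SetLike.mul_mem_graded (SetLike.coe_mem _) hhd
  refine ⟨(DirectSum.decompose 𝒜 r i : A) * h, ⟨i + d, by omega, hmem⟩, ?_, ?_⟩
  · intro hmul
    rcases x.isPrime.mem_or_mem hmul with h1 | h1
    · exact hi h1
    · exact hhx h1
  · intro y hy
    apply hVU
    have hy' : (DirectSum.decompose 𝒜 r i : A) * h ∉ y.asHomogeneousIdeal := hy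
    intro hry
    exact hy' (Ideal.mul_mem_right _ _ (y.asHomogeneousIdeal.isHomogeneous i hry))

/-- The key algebraic fact: if `D(f) ⊆ ⋃_{g ∈ T} D(g)` with `f` homogeneous of positive
degree and all `g ∈ T` homogeneous, then `f` lies in the radical of the span of `T`. -/
private lemma aux_mem_radical {f : A} {d : ℕ} (hd : 0 < d) (hf : f ∈ 𝒜 d)
    {T : Set A} (hT : ∀ g ∈ T, SetLike.IsHomogeneousElem 𝒜 g)
    (h : (basicOpen 𝒜 f : Set (ProjectiveSpectrum 𝒜)) ⊆
      ⋃ g ∈ T, (basicOpen 𝒜 g : Set (ProjectiveSpectrum 𝒜))) :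
    f ∈ (Ideal.span T).radical := by
  classical
  by_contra hf'
  rw [Ideal.radical_eq_sInf, Submodule.mem_sInf] at hf'
  push_neg at hf'
  obtain ⟨P, ⟨hPle, hPprime⟩, hfP⟩ := hf'
  have hQP : (Ideal.homogeneousCore 𝒜 P).toIdeal ≤ P := Ideal.toIdeal_homogeneousCore_le 𝒜 P
  have hQprime : (Ideal.homogeneousCore 𝒜 P).toIdeal.IsPrime := hPprime.homogeneousCore
  have hfQ : f ∉ (Ideal.homogeneousCore 𝒜 P).toIdeal := fun hm => hfP (hQP hm)
  have hfirr : f ∈ HomogeneousIdeal.irrelevant 𝒜 := by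
    rw [HomogeneousIdeal.mem_irrelevant_iff, GradedRing.proj_apply]
    exact DirectSum.decompose_of_mem_ne 𝒜 hf (by omega)
  have hrel : ¬ HomogeneousIdeal.irrelevant 𝒜 ≤ Ideal.homogeneousCore 𝒜 P :=
    fun hle => hfQ (hle hfirr)
  set x : ProjectiveSpectrum 𝒜 := ⟨Ideal.homogeneousCore 𝒜 P, hQprime, hrel⟩
  have hx : x ∈ (basicOpen 𝒜 f : Set (ProjectiveSpectrum 𝒜)) := hfQ
  obtain ⟨g, hgT, hgx⟩ := by simpa using h hx
  exact hgx (Ideal.mem_homogeneousCore_of_homogeneous_of_mem (hT g hgT)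
    (hPle (Ideal.subset_span hgT)))

private lemma aux_subset_of_mem_radical {f : A} {T : Set A}
    (h : f ∈ (Ideal.span T).radical) :
    (basicOpen 𝒜 f : Set (ProjectiveSpectrum 𝒜)) ⊆
      ⋃ g ∈ T, (basicOpen 𝒜 g : Set (ProjectiveSpectrum 𝒜)) := by
  intro x hx
  rw [Set.mem_iUnion₂]
  by_contra H
  push_neg at H
  have hTx : T ⊆ (x.asHomogeneousIdeal : Set A) := by
    intro g hg
    by_contra hgx
    exact H g hg hgx
  have hle : Ideal.span T ≤ x.asHomogeneousIdeal.toIdeal := Ideal.span_le.mpr hTx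
  have : f ∈ x.asHomogeneousIdeal.toIdeal := by
    have := Ideal.radical_mono hle h
    rwa [x.isPrime.radical] at this
  exact hx this

/-- Basic opens of homogeneous elements of positive degree are compact. -/
private lemma aux_isCompact_basicOpen {f : A} {d : ℕ} (hd : 0 < d) (hf : f ∈ 𝒜 d) :
    IsCompact (basicOpen 𝒜 f : Set (ProjectiveSpectrum 𝒜)) := by
  classical
  refine isCompact_of_finite_subcover fun {ι} U hU hcover => ?_
  set T : Set A := {g : A | (∃ e, 0 < e ∧ g ∈ 𝒜 e) ∧
    ∃ i, (basicOpen 𝒜 g : Set (ProjectiveSpectrum 𝒜)) ⊆ U i} with hTdef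
  have h1 : (basicOpen 𝒜 f : Set (ProjectiveSpectrum 𝒜)) ⊆
      ⋃ g ∈ T, (basicOpen 𝒜 g : Set (ProjectiveSpectrum 𝒜)) := by
    intro x hx
    obtain ⟨i, hxi⟩ := Set.mem_iUnion.mp (hcover hx)
    obtain ⟨g, hg, hxg, hgU⟩ := aux_basic_mem_subset 𝒜 (hU i) hxi
    exact Set.mem_iUnion₂.mpr ⟨g, ⟨hg, i, hgU⟩, hxg⟩
  have h2 : f ∈ (Ideal.span T).radical :=
    aux_mem_radical 𝒜 hd hf (fun g hg => by obtain ⟨e, _, he⟩ := hg.1; exact ⟨e, he⟩) h1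
  obtain ⟨n, hn⟩ := h2
  obtain ⟨t, htT, htn⟩ := Submodule.mem_span_finite_of_mem_span hn
  have h3 : (basicOpen 𝒜 f : Set (ProjectiveSpectrum 𝒜)) ⊆
      ⋃ g ∈ (t : Set A), (basicOpen 𝒜 g : Set (ProjectiveSpectrum 𝒜)) :=
    aux_subset_of_mem_radical 𝒜 ⟨n, htn⟩
  have hchoice : ∀ g : {g : A // g ∈ t}, ∃ i,
      (basicOpen 𝒜 g.1 : Set (ProjectiveSpectrum 𝒜)) ⊆ U i :=
    fun g => (htT g.2).2
  choose idx hidx using hchoice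
  refine ⟨t.attach.image idx, ?_⟩
  intro x hx
  obtain ⟨g, hgt, hxg⟩ := Set.mem_iUnion₂.mp (h3 hx)
  refine Set.mem_iUnion₂.mpr ⟨idx ⟨g, hgt⟩, ?_, hidx ⟨g, hgt⟩ hxg⟩
  exact Finset.mem_image.mpr ⟨⟨g, hgt⟩, Finset.mem_attach _ _, rfl⟩

/-- `Proj 𝒜` is compact when the irrelevant ideal is finitely generated. -/
private lemma aux_compactSpace
    (hfg : (HomogeneousIdeal.irrelevant 𝒜).toIdeal.FG) :
    CompactSpace (ProjectiveSpectrum 𝒜) := by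
  classical
  obtain ⟨s, hs⟩ := hfg
  constructor
  refine isCompact_of_finite_subcover fun {ι} U hU hcover => ?_
  set T : Set A := {g : A | (∃ e, 0 < e ∧ g ∈ 𝒜 e) ∧
    ∃ i, (basicOpen 𝒜 g : Set (ProjectiveSpectrum 𝒜)) ⊆ U i} with hTdef
  have h1 : ∀ g ∈ T, SetLike.IsHomogeneousElem 𝒜 g :=
    fun g hg => by obtain ⟨e, _, he⟩ := hg.1; exact ⟨e, he⟩
  have hUT : ∀ x : ProjectiveSpectrum 𝒜,
      x ∈ ⋃ g ∈ T, (basicOpen 𝒜 g : Set (ProjectiveSpectrum 𝒜)) := by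
    intro x
    obtain ⟨i, hxi⟩ := Set.mem_iUnion.mp (hcover (Set.mem_univ x))
    obtain ⟨g, hg, hxg, hgU⟩ := aux_basic_mem_subset 𝒜 (hU i) hxi
    exact Set.mem_iUnion₂.mpr ⟨g, ⟨hg, i, hgU⟩, hxg⟩
  -- every element of the irrelevant ideal is in the radical of the span of `T`
  have hirr : (HomogeneousIdeal.irrelevant 𝒜).toIdeal ≤ (Ideal.span T).radical := by
    intro a ha
    rw [← DirectSum.sum_support_decompose 𝒜 a]
    apply Ideal.sum_mem
    intro i _
    rcases Nat.eq_zero_or_pos i with hi | hi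
    · subst hi
      have h0 := (HomogeneousIdeal.mem_irrelevant_iff 𝒜 a).mp ha
      rw [GradedRing.proj_apply] at h0
      rw [h0]
      exact Ideal.zero_mem _
    · exact aux_mem_radical 𝒜 hi (SetLike.coe_mem _) h1
        (fun x _ => hUT x)
  have key : ∀ a : {a : A // a ∈ s}, ∃ t : Finset A, ↑t ⊆ T ∧
      a.1 ∈ (Ideal.span (t : Set A)).radical := by
    intro a
    have haI : a.1 ∈ (HomogeneousIdeal.irrelevant 𝒜).toIdeal := by
      rw [← hs]; exact Ideal.subset_span a.2
    obtain ⟨n, hn⟩ := hirr haI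
    obtain ⟨t, htT, htn⟩ := Submodule.mem_span_finite_of_mem_span hn
    exact ⟨t, htT, n, htn⟩
  choose ta hta1 hta2 using key
  set T' : Finset A := s.attach.biUnion ta with hT'def
  have hT'T : (T' : Set A) ⊆ T := by
    intro g hg
    obtain ⟨a, _, hga⟩ := Finset.mem_biUnion.mp hg
    exact hta1 a hga
  have hrad : ∀ a ∈ s, a ∈ (Ideal.span (T' : Set A)).radical := by
    intro a ha
    refine Ideal.radical_mono (Ideal.span_mono ?_) (hta2 ⟨a, ha⟩)
    exact fun g hg => Finset.mem_biUnion.mpr ⟨⟨a, ha⟩, Finset.mem_attach _ _, hg⟩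
  have hcov' : (Set.univ : Set (ProjectiveSpectrum 𝒜)) ⊆
      ⋃ g ∈ (T' : Set A), (basicOpen 𝒜 g : Set (ProjectiveSpectrum 𝒜)) := by
    intro x _
    rw [Set.mem_iUnion₂]
    by_contra H
    push_neg at H
    have hT'x : (T' : Set A) ⊆ (x.asHomogeneousIdeal : Set A) := by
      intro g hg
      by_contra hgx
      exact H g hg hgx
    have hle : Ideal.span (T' : Set A) ≤ x.asHomogeneousIdeal.toIdeal :=
      Ideal.span_le.mpr hT'x
    have hsx : ∀ a ∈ s, a ∈ x.asHomogeneousIdeal.toIdeal := by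
      intro a ha
      have := Ideal.radical_mono hle (hrad a ha)
      rwa [x.isPrime.radical] at this
    apply x.not_irrelevant_le
    intro b hb
    have : b ∈ Ideal.span (s : Set A) := by rw [hs]; exact hb
    exact Ideal.span_le.mpr hsx this
  have hchoice : ∀ g : {g : A // g ∈ T'}, ∃ i,
      (basicOpen 𝒜 g.1 : Set (ProjectiveSpectrum 𝒜)) ⊆ U i :=
    fun g => (hT'T g.2).2
  choose idx hidx using hchoice
  refine ⟨T'.attach.image idx, ?_⟩
  intro x hx
  obtain ⟨g, hgt, hxg⟩ := Set.mem_iUnion₂.mp (hcov' hx)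
  refine Set.mem_iUnion₂.mpr ⟨idx ⟨g, hgt⟩, ?_, hidx ⟨g, hgt⟩ hxg⟩
  exact Finset.mem_image.mpr ⟨⟨g, hgt⟩, Finset.mem_attach _ _, rfl⟩

/-- Every compact open is a finite union of basic opens of homogeneous elements of positive
degree. -/
private lemma aux_compact_open_eq {U : Set (ProjectiveSpectrum 𝒜)}
    (hU : IsOpen U) (hUc : IsCompact U) :
    ∃ t : Finset A, (∀ g ∈ t, ∃ d, 0 < d ∧ g ∈ 𝒜 d) ∧
      U = ⋃ g ∈ (t : Set A), (basicOpen 𝒜 g : Set (ProjectiveSpectrum 𝒜)) := by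
  classical
  set ι := {g : A // (∃ d, 0 < d ∧ g ∈ 𝒜 d) ∧
    (basicOpen 𝒜 g : Set (ProjectiveSpectrum 𝒜)) ⊆ U}
  have hcover : U ⊆ ⋃ i : ι, (basicOpen 𝒜 i.1 : Set (ProjectiveSpectrum 𝒜)) := by
    intro x hx
    obtain ⟨g, hg, hxg, hgU⟩ := aux_basic_mem_subset 𝒜 hU hx
    exact Set.mem_iUnion.mpr ⟨⟨g, hg, hgU⟩, hxg⟩
  obtain ⟨t, ht⟩ := hUc.elim_finite_subcover
    (fun i : ι => (basicOpen 𝒜 i.1 : Set (ProjectiveSpectrum 𝒜)))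
    (fun i => (basicOpen 𝒜 i.1).isOpen) hcover
  refine ⟨t.image Subtype.val, ?_, ?_⟩
  · intro g hg
    obtain ⟨i, _, rfl⟩ := Finset.mem_image.mp hg
    exact i.2.1
  · apply Set.Subset.antisymm
    · intro x hx
      obtain ⟨i, hit, hxi⟩ := Set.mem_iUnion₂.mp (ht hx)
      exact Set.mem_iUnion₂.mpr ⟨i.1, Finset.mem_image.mpr ⟨i, hit, rfl⟩, hxi⟩
    · intro x hx
      obtain ⟨g, hgt, hxg⟩ := Set.mem_iUnion₂.mp hx
      obtain ⟨i, _, rfl⟩ := Finset.mem_image.mp hgt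
      exact i.2.2 hxg

end Aux

/-- Let `A` be a positively graded commutative ring which is finitely generated as an
`A₀`-algebra (equivalently, the irrelevant ideal `A₊` is finitely generated). Then `Proj A`
is a spectral topological space: it is T0 and quasi-compact, its quasi-compact open subsets
are closed under finite intersections and form a basis of the topology, and every nonempty
irreducible closed subset has a generic point. -/
theorem projectiveSpectrum_spectral {R A : Type*} [CommSemiring R] [CommRing A] [Algebra R A]
    (𝒜 : ℕ → Submodule R A) [GradedAlgebra 𝒜]
    (hfg : (HomogeneousIdeal.irrelevant 𝒜).toIdeal.FG) :
    T0Space (ProjectiveSpectrum 𝒜) ∧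
    CompactSpace (ProjectiveSpectrum 𝒜) ∧
    (∀ U V : Set (ProjectiveSpectrum 𝒜),
      IsOpen U → IsCompact U → IsOpen V → IsCompact V → IsCompact (U ∩ V)) ∧
    TopologicalSpace.IsTopologicalBasis
      {U : Set (ProjectiveSpectrum 𝒜) | IsOpen U ∧ IsCompact U} ∧
    (∀ V : Set (ProjectiveSpectrum 𝒜), IsIrreducible V → IsClosed V →
      ∃ x : ProjectiveSpectrum 𝒜, closure {x} = V) := by
  classical
  refine ⟨?_, ?_, ?_, ?_, ?_⟩
  · -- T0
    refine t0Space_iff_inseparable _ |>.mpr fun x y h => ?_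
    have h1 : x ∈ closure ({y} : Set (ProjectiveSpectrum 𝒜)) :=
      specializes_iff_mem_closure.mp h.specializes'
    have h2 : y ∈ closure ({x} : Set (ProjectiveSpectrum 𝒜)) :=
      specializes_iff_mem_closure.mp h.specializes
    exact le_antisymm ((le_iff_mem_closure 𝒜 x y).mpr h2) ((le_iff_mem_closure 𝒜 y x).mpr h1)
  · exact aux_compactSpace 𝒜 hfg
  · -- intersections of compact opens
    intro U V hU hUc hV hVc
    obtain ⟨t, htg, rfl⟩ := aux_compact_open_eq 𝒜 hU hUc
    obtain ⟨u, hug, rfl⟩ := aux_compact_open_eq 𝒜 hV hVc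
    have heq : (⋃ g ∈ (t : Set A), (basicOpen 𝒜 g : Set (ProjectiveSpectrum 𝒜))) ∩
        (⋃ h ∈ (u : Set A), (basicOpen 𝒜 h : Set (ProjectiveSpectrum 𝒜))) =
        ⋃ g ∈ (t : Set A), ⋃ h ∈ (u : Set A),
          (basicOpen 𝒜 (g * h) : Set (ProjectiveSpectrum 𝒜)) := by
      ext x
      simp only [Set.mem_inter_iff, Set.mem_iUnion, basicOpen_mul,
        TopologicalSpace.Opens.coe_inf, Set.mem_inter_iff]
      tauto
    rw [heq]
    refine t.finite_toSet.isCompact_biUnion fun g hg => ?_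
    refine u.finite_toSet.isCompact_biUnion fun h hh => ?_
    obtain ⟨d, hd, hgd⟩ := htg g hg
    obtain ⟨e, he, hhe⟩ := hug h hh
    exact aux_isCompact_basicOpen 𝒜 (d := d + e) (by omega)
      (SetLike.mul_mem_graded hgd hhe)
  · -- basis of compact opens
    refine TopologicalSpace.isTopologicalBasis_of_isOpen_of_nhds (fun U hU => hU.1) ?_
    intro x U hx hU
    obtain ⟨f, ⟨d, hd, hf⟩, hxf, hfU⟩ := aux_basic_mem_subset 𝒜 hU hx
    exact ⟨basicOpen 𝒜 f, ⟨(basicOpen 𝒜 f).isOpen, aux_isCompact_basicOpen 𝒜 hd hf⟩, hxf, hfU⟩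
  · -- sober
    intro V hV hVcl
    obtain ⟨z, hz⟩ := hV.nonempty
    have hVeq : zeroLocus 𝒜 (vanishingIdeal V : Set A) = V := by
      rw [zeroLocus_vanishingIdeal_eq_closure, hVcl.closure_eq]
    have hne : (vanishingIdeal V).toIdeal ≠ ⊤ := by
      intro htop
      have h1V : (1 : A) ∈ vanishingIdeal V := by
        rw [← HomogeneousIdeal.mem_iff, htop]; trivial
      exact z.isPrime.ne_top (Ideal.eq_top_iff_one _ |>.mpr
        ((mem_vanishingIdeal V 1).mp h1V z hz))
    have hprime : (vanishingIdeal V).toIdeal.IsPrime := by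
      refine (vanishingIdeal V).isHomogeneous.isPrime_of_homogeneous_mem_or_mem hne ?_
      intro a b _ _ hab
      rw [HomogeneousIdeal.mem_iff] at hab
      have hsub : V ⊆ zeroLocus 𝒜 {a} ∪ zeroLocus 𝒜 {b} := by
        intro w hw
        have hmem : a * b ∈ w.asHomogeneousIdeal :=
          (mem_vanishingIdeal V (a * b)).mp hab w hw
        rcases w.isPrime.mem_or_mem hmem with h | h
        · exact Or.inl ((mem_zeroLocus 𝒜 w {a}).mpr (Set.singleton_subset_iff.mpr h))
        · exact Or.inr ((mem_zeroLocus 𝒜 w {b}).mpr (Set.singleton_subset_iff.mpr h))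
      rcases (isPreirreducible_iff_isClosed_union_isClosed.mp hV.2) _ _
        (isClosed_zeroLocus 𝒜 {a}) (isClosed_zeroLocus 𝒜 {b}) hsub with h | h
      · left
        rw [HomogeneousIdeal.mem_iff]
        exact (mem_vanishingIdeal V a).mpr fun w hw =>
          ((mem_zeroLocus 𝒜 w {a}).mp (h hw)) rfl
      · right
        rw [HomogeneousIdeal.mem_iff]
        exact (mem_vanishingIdeal V b).mpr fun w hw =>
          ((mem_zeroLocus 𝒜 w {b}).mp (h hw)) rfl
    have hrel : ¬ HomogeneousIdeal.irrelevant 𝒜 ≤ vanishingIdeal V := by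
      intro hle
      apply z.not_irrelevant_le
      intro c hc
      exact (mem_vanishingIdeal V c).mp (hle hc) z hz
    refine ⟨⟨vanishingIdeal V, hprime, hrel⟩, ?_⟩
    rw [← zeroLocus_vanishingIdeal_eq_closure, vanishingIdeal_singleton]
    exact hVeq
end

section
/- Let A be a positively graded commutative ring and let a be a nonzero homogeneous element of A of positive degree (i.e. a ∈ A_+). Then the basic open subset D(a) = {P ∈ Proj A | a ∉ P} of Proj A is quasi-compact. -/
/-!
If `D(a) ∩ V(I) = ∅` for a homogeneous ideal `I`, then every homogeneous prime containing `I`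
contains `a`: the relevant ones because they lie in `V(I)`, the others because they contain
`A₊ ∋ a`. As `√I` is the intersection of the homogeneous primes containing `I`, some power of `a`
lies in `I`. Applied to `I = ∑ⱼ I(Zⱼ)` for a family of closed sets `Zⱼ` with
`D(a) ∩ ⋂ⱼ Zⱼ = ∅`, that power already lies in a finite subsum, which gives the finite
intersection property.
-/

namespace ProjectiveSpectrum

open HomogeneousIdeal

variable {A σ : Type*} [CommRing A] [SetLike σ A] [AddSubmonoidClass σ A] {𝒜 : ℕ → σ}
  [GradedRing 𝒜]

theorem basicOpen_inter_eq_empty_iff {a : A} {t : Set (ProjectiveSpectrum 𝒜)} :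
    (basicOpen 𝒜 a : Set (ProjectiveSpectrum 𝒜)) ∩ t = ∅ ↔ t ⊆ zeroLocus 𝒜 {a} := by
  rw [basicOpen_eq_zeroLocus_compl, Set.inter_comm, ← Set.sdiff_eq, Set.sdiff_eq_empty]

theorem zeroLocus_vanishingIdeal_of_isClosed {Z : Set (ProjectiveSpectrum 𝒜)} (hZ : IsClosed Z) :
    zeroLocus 𝒜 (vanishingIdeal Z : Set A) = Z := by
  rw [zeroLocus_vanishingIdeal_eq_closure, hZ.closure_eq]

theorem mem_radical_of_zeroLocus_subset {I : Ideal A} (hI : I.IsHomogeneous 𝒜) {a : A}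
    (ha : a ∈ 𝒜₊) (h : zeroLocus 𝒜 I ⊆ zeroLocus 𝒜 {a}) : a ∈ I.radical := by
  rw [hI.radical_eq, Submodule.mem_sInf]
  rintro P ⟨hP, hIP, hPprime⟩
  by_cases hirr : 𝒜₊ ≤ ⟨P, hP⟩
  · exact hirr ha
  · let x : ProjectiveSpectrum 𝒜 := ⟨⟨P, hP⟩, hPprime, hirr⟩
    exact Set.singleton_subset_iff.mp (h (show x ∈ zeroLocus 𝒜 I from hIP))

theorem isCompact_basicOpen {a : A} (ha : a ∈ 𝒜₊) :
    IsCompact (basicOpen 𝒜 a : Set (ProjectiveSpectrum 𝒜)) := by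
  refine isCompact_of_finite_subfamily_closed fun Z hZ hDZ => ?_
  set I := fun j => vanishingIdeal (Z j)
  have hIZ (j) : zeroLocus 𝒜 (I j : Set A) = Z j := zeroLocus_vanishingIdeal_of_isClosed (hZ j)
  obtain ⟨n, hn⟩ : a ∈ (⨆ j, I j).toIdeal.radical := by
    refine mem_radical_of_zeroLocus_subset (⨆ j, I j).isHomogeneous ha ?_
    rwa [coe_toIdeal, zeroLocus_iSup_homogeneousIdeal, ← basicOpen_inter_eq_empty_iff,
      Set.iInter_congr hIZ]
  rw [toIdeal_iSup] at hn
  obtain ⟨u, hu⟩ := Submodule.exists_finset_of_mem_iSup (fun j => (I j).toIdeal) hn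
  refine ⟨u, basicOpen_inter_eq_empty_iff.mpr ?_⟩
  calc ⋂ j ∈ u, Z j = zeroLocus 𝒜 (⨆ j ∈ u, (I j).toIdeal : Ideal A) := by
        simp only [zeroLocus_iSup_ideal, coe_toIdeal, hIZ]
    _ ⊆ zeroLocus 𝒜 {a ^ n} := zeroLocus_anti_mono 𝒜 (Set.singleton_subset_iff.mpr hu)
    _ ⊆ zeroLocus 𝒜 {a} := fun x hx => Set.singleton_subset_iff.mpr <|
        x.isPrime.mem_of_pow_mem n (Set.singleton_subset_iff.mp hx)

end ProjectiveSpectrum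

theorem projectiveSpectrum_basicOpen_isCompact_general {R A : Type*} [CommSemiring R] [CommRing A]
    [Algebra R A] (𝒜 : ℕ → Submodule R A) [GradedAlgebra 𝒜]
    (a : A) {i : ℕ} (hi : 0 < i) (ha : a ∈ 𝒜 i) :
    IsCompact (ProjectiveSpectrum.basicOpen 𝒜 a : Set (ProjectiveSpectrum 𝒜)) :=
  ProjectiveSpectrum.isCompact_basicOpen (HomogeneousIdeal.mem_irrelevant_of_mem 𝒜 hi ha)

/-- Let `A` be a positively graded commutative ring and `a` a nonzero homogeneous element of
positive degree. Then the basic open subset `D(a) = {P ∈ Proj A | a ∉ P}` of `Proj A` is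
quasi-compact. -/
theorem projectiveSpectrum_basicOpen_isCompact {R A : Type*} [CommSemiring R] [CommRing A]
    [Algebra R A] (𝒜 : ℕ → Submodule R A) [GradedAlgebra 𝒜]
    (a : A) {i : ℕ} (hi : 0 < i) (ha : a ∈ 𝒜 i) (ha0 : a ≠ 0) :
    IsCompact (ProjectiveSpectrum.basicOpen 𝒜 a : Set (ProjectiveSpectrum 𝒜)) :=
  projectiveSpectrum_basicOpen_isCompact_general 𝒜 a hi ha
end

section
/- Let A be a positively graded commutative ring whose irrelevant ideal A_+ is finitely generated (equivalently, A is finitely generated as an A_0-algebra). Then the topological space Proj A is quasi-compact. -/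
/-!
Write the closed sets of a family with empty intersection as zero loci `V(Jᵢ)` of homogeneous
ideals. Then `V(⨆ Jᵢ) = ∅`, i.e. `A₊ ⊆ √(⨆ Jᵢ)`. As `A₊` is finitely generated, some power `A₊ⁿ`
lies in `⨆ Jᵢ`; being finitely generated itself, `A₊ⁿ` is a compact element of the lattice of
ideals and so lies in a finite partial supremum, whose zero locus is then empty as well.
-/

theorem Ideal.exists_finset_le_radical_iSup_of_fg {R ι : Type*} [CommSemiring R] {I : Ideal R}
    (hI : I.FG) (J : ι → Ideal R) (h : I ≤ (⨆ i, J i).radical) :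
    ∃ t : Finset ι, I ≤ (⨆ i ∈ t, J i).radical := by
  obtain ⟨n, hn⟩ := Ideal.exists_pow_le_of_le_radical_of_fg h hI
  obtain ⟨t, ht⟩ := CompleteLattice.IsCompactElement.exists_finset_of_le_iSup _
    ((Submodule.fg_iff_compact _).mp hI.pow) J hn
  exact ⟨t, fun x hx => ⟨n, ht (Ideal.pow_mem_pow hx n)⟩⟩

namespace ProjectiveSpectrum

variable {R A : Type*} [CommSemiring R] [CommRing A] [Algebra R A] (𝒜 : ℕ → Submodule R A)
  [GradedAlgebra 𝒜]

theorem zeroLocus_eq_empty_iff_irrelevant_le_radical (J : HomogeneousIdeal 𝒜) :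
    zeroLocus 𝒜 (J : Set A) = ∅ ↔
      (HomogeneousIdeal.irrelevant 𝒜).toIdeal ≤ J.toIdeal.radical := by
  refine ⟨fun h a ha => ?_, fun h => Set.eq_empty_of_forall_notMem fun x hx => ?_⟩
  · rw [J.isHomogeneous.radical_eq, Ideal.mem_sInf]
    rintro P ⟨hP, hJP, hPprime⟩
    by_contra haP
    have hx : (⟨⟨P, hP⟩, hPprime, fun hle => haP (hle ha)⟩ : ProjectiveSpectrum 𝒜) ∈
        zeroLocus 𝒜 (J : Set A) := hJP
    rwa [h] at hx
  · exact x.not_irrelevant_le fun a ha => x.isPrime.radical_le_iff.mpr hx (h ha)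

end ProjectiveSpectrum

open ProjectiveSpectrum in
/-- Let `A` be a positively graded commutative ring whose irrelevant ideal `A₊` is finitely
generated. Then `Proj A` is quasi-compact. -/
theorem projectiveSpectrum_compactSpace {R A : Type*} [CommSemiring R] [CommRing A]
    [Algebra R A] (𝒜 : ℕ → Submodule R A) [GradedAlgebra 𝒜]
    (hfg : (HomogeneousIdeal.irrelevant 𝒜).toIdeal.FG) :
    CompactSpace (ProjectiveSpectrum 𝒜) := by
  refine compactSpace_of_finite_subfamily_closed fun {ι} Z hZ hempty => ?_
  obtain ⟨J, rfl⟩ : ∃ J : ι → HomogeneousIdeal 𝒜, Z = fun i => zeroLocus 𝒜 (J i : Set A) :=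
    ⟨fun i => vanishingIdeal (Z i), funext fun i => by
      rw [zeroLocus_vanishingIdeal_eq_closure, (hZ i).closure_eq]⟩
  simp_rw [← zeroLocus_iSup_homogeneousIdeal, zeroLocus_eq_empty_iff_irrelevant_le_radical,
    HomogeneousIdeal.toIdeal_iSup] at hempty ⊢
  exact Ideal.exists_finset_le_radical_iSup_of_fg hfg _ hempty
end

section
/- Let A be a positively graded commutative ring which is finitely generated as an A_0-algebra. An open subset U of Proj A is quasi-compact if and only if U = D(J) for some finitely generated homogeneous ideal J of A. -/
open DirectSum ProjectiveSpectrum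

section Aux

variable {R A : Type*} [CommSemiring R] [CommRing A] [Algebra R A]
  (𝒜 : ℕ → Submodule R A) [GradedAlgebra 𝒜]

/-- If all homogeneous components of `g` lie in a homogeneous ideal `x`, then `g ∈ x`. -/
lemma aux_mem_of_components {x : ProjectiveSpectrum 𝒜} {g : A}
    (h : ∀ i, (DirectSum.decompose 𝒜 g i : A) ∈ x.asHomogeneousIdeal) :
    g ∈ x.asHomogeneousIdeal := by
  classical
  rw [← DirectSum.sum_support_decompose 𝒜 g]
  exact Ideal.sum_mem _ fun i _ => h i

lemma aux_exists_component_not_mem {x : ProjectiveSpectrum 𝒜} {g : A}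
    (h : g ∉ x.asHomogeneousIdeal) :
    ∃ i, (DirectSum.decompose 𝒜 g i : A) ∉ x.asHomogeneousIdeal := by
  by_contra hc
  push_neg at hc
  exact h (aux_mem_of_components 𝒜 hc)

/-- The basic open set of a homogeneous element of positive degree is compact. -/
lemma aux_isCompact_basicOpen_pos {f : A} {m : ℕ} (hf : f ∈ 𝒜 m) (hm : 0 < m) :
    IsCompact (ProjectiveSpectrum.basicOpen 𝒜 f : Set (ProjectiveSpectrum 𝒜)) := by
  classical
  refine isCompact_of_finite_subcover fun {ι} Uo hUo hUc => ?_
  choose s hs using fun i => (isClosed_iff_zeroLocus 𝒜 _).mp (hUo i).isClosed_compl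
  -- the set of homogeneous elements whose basic open refines the cover
  set S : Set A := {g | SetLike.IsHomogeneousElem 𝒜 g ∧
    ∃ i, (ProjectiveSpectrum.basicOpen 𝒜 g : Set (ProjectiveSpectrum 𝒜)) ⊆ Uo i} with hS
  have hIhom : (Ideal.span S).IsHomogeneous 𝒜 :=
    Ideal.homogeneous_span 𝒜 S fun x hx => hx.1
  have hcov : (ProjectiveSpectrum.basicOpen 𝒜 f : Set (ProjectiveSpectrum 𝒜)) ⊆
      ⋃ g ∈ S, (ProjectiveSpectrum.basicOpen 𝒜 g : Set (ProjectiveSpectrum 𝒜)) := by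
    intro x hx
    obtain ⟨i, hxi⟩ := Set.mem_iUnion.mp (hUc hx)
    have hxz : x ∉ zeroLocus 𝒜 (s i) := by
      rw [← hs i]; simpa using hxi
    rw [mem_zeroLocus, Set.not_subset] at hxz
    obtain ⟨g, hgs, hgx⟩ := hxz
    obtain ⟨j, hj⟩ := aux_exists_component_not_mem 𝒜 hgx
    refine Set.mem_biUnion ?_ hj
    refine ⟨⟨j, SetLike.coe_mem _⟩, i, fun y hy => ?_⟩
    have hgy : g ∉ y.asHomogeneousIdeal := fun hg => hy (y.asHomogeneousIdeal.2 j hg)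
    have : y ∉ zeroLocus 𝒜 (s i) := by
      rw [mem_zeroLocus, Set.not_subset]; exact ⟨g, hgs, hgy⟩
    rw [← hs i] at this
    simpa using this
  have hfrad : f ∈ (Ideal.span S).radical := by
    by_contra hfr
    rw [hIhom.radical_eq, Ideal.mem_sInf] at hfr
    push_neg at hfr
    obtain ⟨J, ⟨hJh, hJle, hJp⟩, hfJ⟩ := hfr
    have hfirr : f ∈ HomogeneousIdeal.irrelevant 𝒜 := by
      rw [HomogeneousIdeal.mem_irrelevant_iff, GradedRing.proj_apply,
        DirectSum.decompose_of_mem_ne 𝒜 hf hm.ne']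
    have hrel : ¬ HomogeneousIdeal.irrelevant 𝒜 ≤ ⟨J, hJh⟩ := fun hle => hfJ (hle hfirr)
    set x : ProjectiveSpectrum 𝒜 := ⟨⟨J, hJh⟩, hJp, hrel⟩
    have hxf : x ∈ (ProjectiveSpectrum.basicOpen 𝒜 f : Set (ProjectiveSpectrum 𝒜)) := hfJ
    obtain ⟨g, hgS, hgx⟩ := Set.mem_iUnion₂.mp (hcov hxf)
    exact hgx (hJle (Ideal.subset_span hgS))
  obtain ⟨n, hfn⟩ := hfrad
  obtain ⟨T, hTS, hfnT⟩ := Submodule.mem_span_finite_of_mem_span hfn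
  have hTchoice : ∀ g ∈ T, ∃ i, (ProjectiveSpectrum.basicOpen 𝒜 g :
      Set (ProjectiveSpectrum 𝒜)) ⊆ Uo i := fun g hg => (hTS (Finset.mem_coe.mpr hg)).2
  choose idx hidx using hTchoice
  refine ⟨T.attach.image fun g => idx g.1 g.2, fun x hx => ?_⟩
  have hfx : f ∉ x.asHomogeneousIdeal := hx
  have hfnx : (f : A) ^ n ∉ x.asHomogeneousIdeal := fun hc =>
    hfx (x.isPrime.mem_of_pow_mem n hc)
  have : ¬ Ideal.span (T : Set A) ≤ x.asHomogeneousIdeal.toIdeal := fun hle => hfnx (hle hfnT)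
  rw [Ideal.span_le, Set.not_subset] at this
  obtain ⟨g, hgT, hgx⟩ := this
  have hgT' : g ∈ T := Finset.mem_coe.mp hgT
  refine Set.mem_biUnion (Finset.mem_image.mpr ⟨⟨g, hgT'⟩, Finset.mem_attach _ _, rfl⟩)
    (hidx g hgT' hgx)

/-- A finitely generated homogeneous ideal admits a finite homogeneous "generating" set. -/
lemma aux_components {J : Ideal A} (hJ : J.IsHomogeneous 𝒜) (hFG : J.FG) :
    ∃ T : Finset A, (∀ h ∈ T, SetLike.IsHomogeneousElem 𝒜 h) ∧ (↑T : Set A) ⊆ (J : Set A) ∧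
      J ≤ Ideal.span (T : Set A) := by
  classical
  obtain ⟨s, hs⟩ := hFG
  refine ⟨s.biUnion fun g => (DirectSum.decompose 𝒜 g).support.image
    fun i => (DirectSum.decompose 𝒜 g i : A), ?_, ?_, ?_⟩
  · intro h hh
    obtain ⟨g, _, hh⟩ := Finset.mem_biUnion.mp hh
    obtain ⟨i, _, rfl⟩ := Finset.mem_image.mp hh
    exact ⟨i, SetLike.coe_mem _⟩
  · intro h hh
    obtain ⟨g, hg, hh⟩ := Finset.mem_biUnion.mp hh
    obtain ⟨i, _, rfl⟩ := Finset.mem_image.mp hh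
    exact hJ i (hs ▸ Ideal.subset_span hg)
  · rw [← hs, Ideal.span_le]
    intro g hg
    rw [SetLike.mem_coe, ← DirectSum.sum_support_decompose 𝒜 g]
    refine Ideal.sum_mem _ fun i hi => Ideal.subset_span ?_
    exact Finset.mem_biUnion.mpr ⟨g, hg, Finset.mem_image.mpr ⟨i, hi, rfl⟩⟩

/-- The basic open of any homogeneous element lying in the irrelevant ideal is compact. -/
lemma aux_isCompact_basicOpen_irr {f : A} (hf : SetLike.IsHomogeneousElem 𝒜 f)
    (hirr : f ∈ (HomogeneousIdeal.irrelevant 𝒜).toIdeal) :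
    IsCompact (ProjectiveSpectrum.basicOpen 𝒜 f : Set (ProjectiveSpectrum 𝒜)) := by
  obtain ⟨m, hfm⟩ := hf
  rcases Nat.eq_zero_or_pos m with hm | hm
  · subst hm
    have hf0 : f = 0 := by
      have h1 : GradedRing.proj 𝒜 0 f = 0 := hirr
      rwa [GradedRing.proj_apply, DirectSum.decompose_of_mem_same 𝒜 hfm] at h1
    rw [hf0, ProjectiveSpectrum.basicOpen_zero]
    exact isCompact_empty
  · exact aux_isCompact_basicOpen_pos 𝒜 hfm hm

/-- Assuming the irrelevant ideal is finitely generated, the basic open set of any homogeneous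
element is compact. -/
lemma aux_isCompact_basicOpen_s3 (hfg : (HomogeneousIdeal.irrelevant 𝒜).toIdeal.FG)
    {a : A} (ha : SetLike.IsHomogeneousElem 𝒜 a) :
    IsCompact (ProjectiveSpectrum.basicOpen 𝒜 a : Set (ProjectiveSpectrum 𝒜)) := by
  obtain ⟨T, hThom, hTsub, hTle⟩ :=
    aux_components 𝒜 (HomogeneousIdeal.irrelevant 𝒜).isHomogeneous hfg
  have key : (ProjectiveSpectrum.basicOpen 𝒜 a : Set (ProjectiveSpectrum 𝒜)) =
      ⋃ t ∈ T, (ProjectiveSpectrum.basicOpen 𝒜 (a * t) : Set (ProjectiveSpectrum 𝒜)) := by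
    ext x
    simp only [Set.mem_iUnion, SetLike.mem_coe, ProjectiveSpectrum.mem_basicOpen]
    constructor
    · intro hax
      have : ¬ Ideal.span (T : Set A) ≤ x.asHomogeneousIdeal.toIdeal := by
        intro hle
        exact x.not_irrelevant_le fun z hz => hle (hTle hz)
      rw [Ideal.span_le, Set.not_subset] at this
      obtain ⟨t, htT, htx⟩ := this
      exact ⟨t, htT, fun hc => (x.isPrime.mem_or_mem hc).elim hax htx⟩
    · rintro ⟨t, htT, hatx⟩
      exact fun ha => hatx (Ideal.mul_mem_right t _ ha)
  rw [key]
  refine T.finite_toSet.isCompact_biUnion fun t ht => ?_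
  obtain ⟨i, hti⟩ := hThom t ht
  obtain ⟨n, han⟩ := ha
  refine aux_isCompact_basicOpen_irr 𝒜 ⟨n + i, SetLike.mul_mem_graded han hti⟩ ?_
  exact Ideal.mul_mem_left _ a (hTsub ht)

end Aux

/-- Let `A` be a positively graded commutative ring which is finitely generated as an
`A₀`-algebra. An open subset `U` of `Proj A` is quasi-compact if and only if `U = D(J)` for
some finitely generated homogeneous ideal `J` of `A`. -/
theorem projectiveSpectrum_isCompact_open_iff {R A : Type*} [CommSemiring R] [CommRing A]
    [Algebra R A] (𝒜 : ℕ → Submodule R A) [GradedAlgebra 𝒜]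
    (hfg : (HomogeneousIdeal.irrelevant 𝒜).toIdeal.FG)
    (U : Set (ProjectiveSpectrum 𝒜)) (hU : IsOpen U) :
    IsCompact U ↔ ∃ J : HomogeneousIdeal 𝒜, J.toIdeal.FG ∧
      U = (ProjectiveSpectrum.zeroLocus 𝒜 (J.toIdeal : Set A))ᶜ := by
  classical
  constructor
  · intro hc
    obtain ⟨s, hs⟩ := (isClosed_iff_zeroLocus 𝒜 Uᶜ).mp hU.isClosed_compl
    have hUeq : U = (zeroLocus 𝒜 s)ᶜ := by rw [← hs, compl_compl]
    have hsub : ∀ p : s × ℕ, (ProjectiveSpectrum.basicOpen 𝒜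
        (DirectSum.decompose 𝒜 (p.1 : A) p.2 : A) : Set (ProjectiveSpectrum 𝒜)) ⊆ U := by
      rintro ⟨g, i⟩ y hy
      have hgy : (g : A) ∉ y.asHomogeneousIdeal := fun hg => hy (y.asHomogeneousIdeal.2 i hg)
      rw [hUeq]
      intro hyz
      exact hgy (hyz g.2)
    have hcov : U ⊆ ⋃ p : s × ℕ, (ProjectiveSpectrum.basicOpen 𝒜
        (DirectSum.decompose 𝒜 (p.1 : A) p.2 : A) : Set (ProjectiveSpectrum 𝒜)) := by
      intro x hx
      rw [hUeq] at hx
      rw [Set.mem_compl_iff, mem_zeroLocus, Set.not_subset] at hx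
      obtain ⟨g, hgs, hgx⟩ := hx
      obtain ⟨i, hi⟩ := aux_exists_component_not_mem 𝒜 hgx
      exact Set.mem_iUnion.mpr ⟨(⟨g, hgs⟩, i), hi⟩
    obtain ⟨t, ht⟩ := hc.elim_finite_subcover _
      (fun p => ProjectiveSpectrum.isOpen_basicOpen 𝒜) hcov
    set G : Finset A := t.image fun p => (DirectSum.decompose 𝒜 (p.1 : A) p.2 : A) with hG
    have hGhom : ∀ g ∈ (G : Set A), SetLike.IsHomogeneousElem 𝒜 g := by
      intro g hg
      obtain ⟨p, _, rfl⟩ := Finset.mem_image.mp hg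
      exact ⟨p.2, SetLike.coe_mem _⟩
    refine ⟨⟨Ideal.span (G : Set A), Ideal.homogeneous_span 𝒜 _ hGhom⟩,
      ⟨G, rfl⟩, ?_⟩
    show U = (zeroLocus 𝒜 ((Ideal.span (G : Set A) : Ideal A) : Set A))ᶜ
    rw [ProjectiveSpectrum.zeroLocus_span]
    ext x
    rw [Set.mem_compl_iff, mem_zeroLocus, Set.not_subset]
    constructor
    · intro hx
      obtain ⟨p, hpt, hxp⟩ := Set.mem_iUnion₂.mp (ht hx)
      exact ⟨_, Finset.mem_coe.mpr (Finset.mem_image.mpr ⟨p, hpt, rfl⟩), hxp⟩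
    · rintro ⟨g, hgG, hgx⟩
      obtain ⟨p, hpt, rfl⟩ := Finset.mem_image.mp (Finset.mem_coe.mp hgG)
      exact hsub p hgx
  · rintro ⟨J, hJfg, rfl⟩
    obtain ⟨T, hThom, hTsub, hTle⟩ := aux_components 𝒜 J.isHomogeneous hJfg
    have key : (zeroLocus 𝒜 (J.toIdeal : Set A))ᶜ =
        ⋃ h ∈ T, (ProjectiveSpectrum.basicOpen 𝒜 h : Set (ProjectiveSpectrum 𝒜)) := by
      ext x
      rw [Set.mem_compl_iff, mem_zeroLocus, Set.not_subset]
      simp only [Set.mem_iUnion, SetLike.mem_coe, ProjectiveSpectrum.mem_basicOpen]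
      constructor
      · rintro ⟨g, hgJ, hgx⟩
        have : ¬ Ideal.span (T : Set A) ≤ x.asHomogeneousIdeal.toIdeal := by
          intro hle
          exact hgx (hle (hTle hgJ))
        rw [Ideal.span_le, Set.not_subset] at this
        obtain ⟨h, hhT, hhx⟩ := this
        exact ⟨h, hhT, hhx⟩
      · rintro ⟨h, hhT, hhx⟩
        exact ⟨h, hTsub hhT, hhx⟩
    rw [key]
    exact T.finite_toSet.isCompact_biUnion fun h hh =>
      aux_isCompact_basicOpen_s3 𝒜 hfg (hThom h hh)
end

section
/- Let A be a coherent positively graded commutative ring, i.e. every finitely generated homogeneous ideal of A is finitely presented as an A-module. Then for any two finitely generated homogeneous ideals I and J of A, the intersection I ∩ J is again a finitely generated (homogeneous) ideal of A. -/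
/-! The intersection `I ⊓ J` is the image, under the first projection, of the kernel of the
surjection `I × J → I ⊔ J`, `(x, y) ↦ x + y`. The source is finitely generated and the target is
finitely presented by coherence (`I ⊔ J` is homogeneous and finitely generated), so that kernel
is finitely generated, and hence so is its image `I ⊓ J`. -/

namespace Submodule

variable {R M : Type*} [CommRing R] [AddCommGroup M] [Module R M]

def addToSup (N P : Submodule R M) : (N × P) →ₗ[R] ↥(N ⊔ P) :=
  LinearMap.coprod (inclusion le_sup_left) (inclusion le_sup_right)

theorem addToSup_surjective (N P : Submodule R M) : Function.Surjective (addToSup N P) := by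
  rintro ⟨x, hx⟩
  obtain ⟨y, hy, z, hz, rfl⟩ := mem_sup.mp hx
  exact ⟨(⟨y, hy⟩, ⟨z, hz⟩), rfl⟩

theorem map_fst_ker_addToSup (N P : Submodule R M) :
    (LinearMap.ker (addToSup N P)).map (N.subtype ∘ₗ LinearMap.fst R N P) = N ⊓ P := by
  apply le_antisymm
  · rintro _ ⟨⟨x, y⟩, hxy, rfl⟩
    have hx : (x : M) = -(y : M) := eq_neg_of_add_eq_zero_left (congrArg Subtype.val hxy)
    exact ⟨x.2, by simp [hx]⟩
  · rintro x ⟨hxN, hxP⟩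
    refine ⟨(⟨x, hxN⟩, ⟨-x, P.neg_mem hxP⟩), ?_, rfl⟩
    ext
    simp [addToSup]

theorem fg_inf_of_finitePresentation_sup {N P : Submodule R M} (hN : N.FG) (hP : P.FG)
    [Module.FinitePresentation R ↥(N ⊔ P)] : (N ⊓ P).FG := by
  have : Module.Finite R N := Module.Finite.iff_fg.mpr hN
  have : Module.Finite R P := Module.Finite.iff_fg.mpr hP
  rw [← map_fst_ker_addToSup]
  exact (Module.FinitePresentation.fg_ker _ (addToSup_surjective N P)).map _

end Submodule

/-- Let `A` be a coherent positively graded commutative ring, i.e. every finitely generated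
homogeneous ideal of `A` is finitely presented as an `A`-module. Then for any two finitely
generated homogeneous ideals `I` and `J` of `A`, the intersection `I ∩ J` is again a finitely
generated homogeneous ideal of `A`. -/
theorem coherent_inf_fg {R A : Type*} [CommSemiring R] [CommRing A] [Algebra R A]
    (𝒜 : ℕ → Submodule R A) [GradedAlgebra 𝒜]
    (hcoh : ∀ I : Ideal A, I.IsHomogeneous 𝒜 → I.FG → Module.FinitePresentation A I)
    (I J : Ideal A) (hI : I.IsHomogeneous 𝒜) (hJ : J.IsHomogeneous 𝒜)
    (hIfg : I.FG) (hJfg : J.FG) :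
    (I ⊓ J).IsHomogeneous 𝒜 ∧ (I ⊓ J).FG := by
  have : Module.FinitePresentation A ↥(I ⊔ J) :=
    hcoh (I ⊔ J) (hI.sup hJ) (Submodule.FG.sup hIfg hJfg)
  exact ⟨hI.inf hJ, Submodule.fg_inf_of_finitePresentation_sup hIfg hJfg⟩
end
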